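/- For all real Y₁, Y₂, Z, setting Z̃ = −Z, Ỹ₁ = Y₁ − log(1+e^{−2Z}), Ỹ₂ = Y₂ + log(1+e^{2Z}), the identity X_{Y₂} · R · X_{Y₁} = X_{Ỹ₂} · R · X_{Z̃} · F · X_{Z̃} · R · X_{Ỹ₁} holds. -/

import Mathlib

open Matrix Real

noncomputable def Xm (Z : ℝ) : Matrix (Fin 2) (Fin 2) ℝ :=
  !![0, -Real.exp (Z / 2); Real.exp (-Z / 2), 0]

def Fm : Matrix (Fin 2) (Fin 2) ℝ := !![0, 1; -1, 0]
def Rm : Matrix (Fin 2) (Fin 2) ℝ := !![1, 1; -1, 0]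

/-!
Since `X_U F X_W = X_{U+W}`, the right-hand side collapses to `X_{Ỹ₂} R X_{-2Z} R X_{Ỹ₁}`.
A product `X_A R X_B` is `[[0, -e^{s/2}], [e^{-s/2}, -e^{(B-A)/2}]]` with `s = A + B`, and
`X_A R X_W R X_B` has the same shape with `s = A + W + B` and last entry
`-2 cosh (W/2) e^{(B-A)/2}`. As `(1 + e^W) e^{-W/2} = 2 cosh (W/2)`, moving `A` down and `B` up
by `log (1 + e^W)` absorbs the middle factor `X_W R`; with `W = -2Z` the shifts match those of
the statement because `log (1 + e^{2Z}) = 2Z + log (1 + e^{-2Z})`.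
-/

theorem log_one_add_exp (x : ℝ) : log (1 + exp x) = x + log (1 + exp (-x)) := by
  rw [← log_exp x, ← log_mul (exp_pos x).ne' (by positivity), log_exp, mul_add, mul_one,
    ← exp_add, add_neg_cancel, exp_zero, add_comm]

theorem Xm_mul_Fm_mul_Xm (U W : ℝ) : Xm U * Fm * Xm W = Xm (U + W) := by
  simp only [Xm, Fm, mul_fin_two, mul_zero, zero_mul, add_zero, zero_add, mul_one, mul_neg,
    neg_neg, neg_zero, ← exp_add]
  ring_nf

theorem Xm_mul_Rm_mul_Xm (A B : ℝ) :
    Xm A * Rm * Xm B = !![0, -exp ((A + B) / 2); exp (-(A + B) / 2), -exp ((B - A) / 2)] := by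
  simp only [Xm, Rm, mul_fin_two, mul_zero, zero_mul, add_zero, zero_add, mul_one, mul_neg,
    neg_neg, neg_zero, ← exp_add]
  ring_nf

theorem Xm_mul_Rm_mul_Xm_mul_Rm_mul_Xm (A W B : ℝ) :
    Xm A * Rm * Xm W * Rm * Xm B =
      !![0, -exp ((A + W + B) / 2); exp (-(A + W + B) / 2),
        -((exp (W / 2) + exp (-W / 2)) * exp ((B - A) / 2))] := by
  simp only [Xm, Rm, mul_fin_two, mul_zero, zero_mul, add_zero, zero_add, mul_one, mul_neg,
    neg_neg, neg_zero, add_mul, ← exp_add]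
  ring_nf

theorem Xm_mul_Rm_mul_Xm_mul_Rm_mul_Xm_eq_Xm_mul_Rm_mul_Xm (A W B : ℝ) :
    Xm A * Rm * Xm W * Rm * Xm B =
      Xm (A + W - log (1 + exp W)) * Rm * Xm (B + log (1 + exp W)) := by
  set ℓ := log (1 + exp W)
  have hsum : A + W - ℓ + (B + ℓ) = A + W + B := by ring
  have hdiff :
      exp ((B + ℓ - (A + W - ℓ)) / 2) = (exp (W / 2) + exp (-W / 2)) * exp ((B - A) / 2) :=
    calc exp ((B + ℓ - (A + W - ℓ)) / 2) = exp ℓ * exp (-W / 2) * exp ((B - A) / 2) := by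
          rw [← exp_add, ← exp_add]; ring_nf
      _ = (exp (W / 2) + exp (-W / 2)) * exp ((B - A) / 2) := by
          rw [exp_log (by positivity), add_mul, one_mul, ← exp_add, add_comm]; ring_nf
  rw [Xm_mul_Rm_mul_Xm_mul_Rm_mul_Xm, Xm_mul_Rm_mul_Xm, hsum, hdiff]

theorem pending_flip_identity_3 (Y₁ Y₂ Z : ℝ) :
    Xm Y₂ * Rm * Xm Y₁ =
      Xm (Y₂ + Real.log (1 + Real.exp (2 * Z))) * Rm * Xm (-Z) * Fm * Xm (-Z) * Rm *
        Xm (Y₁ - Real.log (1 + Real.exp (-2 * Z))) := by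
  have hY₂ : Y₂ + log (1 + exp (2 * Z)) + -2 * Z - log (1 + exp (-2 * Z)) = Y₂ := by
    rw [log_one_add_exp, neg_mul]; ring
  rw [mul_assoc (Xm _ * Rm) (Xm (-Z)) Fm, mul_assoc (Xm _ * Rm), Xm_mul_Fm_mul_Xm,
    show -Z + -Z = -2 * Z by ring, Xm_mul_Rm_mul_Xm_mul_Rm_mul_Xm_eq_Xm_mul_Rm_mul_Xm, hY₂,
    sub_add_cancel]
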